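/- arXiv:2201.08003 — 3 statements merged into one kernel-verified Lean document; each statement's English description precedes it below -/
import Mathlib

section
/- Let B ∈ R^{K×m} have rank K and Σ_W ∈ R^{K×K} be symmetric positive definite. Let P_B = B^T (B B^T)^{-1} B be the orthogonal projection onto the row space of B. Then for every i, j, the (i,j) entry of Θ P_B satisfies |(Θ P_B)_{ij}| ≤ ‖Θ_{i·}‖_1 · (max_{1≤ℓ≤m} ‖Σ_W^{1/2} B_ℓ‖_2) · ‖Σ_W^{1/2} B_j‖_2 / λ_K(B^T Σ_W B), where Θ_{i·} is the i-th row of Θ ∈ R^{p×m}, B_ℓ is the ℓ-th column of B, and λ_K(M) denotes the K-th largest eigenvalue of M. -/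
open Matrix MeasureTheory

noncomputable def l1norm {p : ℕ} (v : Fin p → ℝ) : ℝ := ∑ i, |v i|
noncomputable def l2norm {p : ℕ} (v : Fin p → ℝ) : ℝ := Real.sqrt (∑ i, v i ^ 2)
noncomputable def linfnorm {p : ℕ} (v : Fin p → ℝ) : ℝ := ⨆ i, |v i|

/-- ℓ2→ℓ2 operator norm of a real matrix. -/
noncomputable def opNorm {n m : ℕ} (A : Matrix (Fin n) (Fin m) ℝ) : ℝ :=
  ‖LinearMap.toContinuousLinearMap (Matrix.toEuclideanLin A)‖

noncomputable def sortedDesc {n : ℕ} (f : Fin n → ℝ) : Fin n → ℝ :=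
  fun i => (f ∘ Tuple.sort f) i.rev

open Classical in
/-- `eigDesc A k` is the (k+1)-th largest eigenvalue of a real symmetric matrix `A`
(and `0` if `A` is not symmetric). -/
noncomputable def eigDesc {n : ℕ} (A : Matrix (Fin n) (Fin n) ℝ) : Fin n → ℝ :=
  if h : A.IsHermitian then sortedDesc h.eigenvalues else 0

/-- `singDesc A k` is the (k+1)-th largest singular value of `A`. -/
noncomputable def singDesc {n m : ℕ} (A : Matrix (Fin n) (Fin m) ℝ) : Fin m → ℝ :=
  fun k => Real.sqrt (eigDesc (Aᵀ * A) k)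

/-!
Put `C = R B`, so that `N = Bᵀ Σ_W B = Cᵀ C` is positive semidefinite of rank `K`; its `K`-th
largest eigenvalue `λ` is therefore its smallest nonzero one. The projection `P = P_B` is
symmetric and idempotent, fixes the columns of `Cᵀ`, and kills `ker C = ker N`. So each row `P_l`
is orthogonal to `ker N`, and expanding in an eigenbasis of `N` gives
`λ ‖P_l‖² ≤ P_lᵀ N P_l = (P N Pᵀ)_ll = N_ll = ‖C_l‖²`.
As `P_lj = ⟨P_l, P_j⟩`, Cauchy–Schwarz yields `λ |P_lj| ≤ ‖C_l‖ ‖C_j‖`; bounding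
`‖C_l‖` by its maximum over `l` and summing against the row `Θ_i` gives the claim.
-/

open Finset in
theorem Monotone.eq_zero_iff_lt {α : Type*} [PartialOrder α] [Zero α] [DecidableEq α] {m K : ℕ}
    {g : Fin m → α} (hg : Monotone g) (h0 : ∀ i, 0 ≤ g i) (hK : #{i | g i ≠ 0} = K) (i : Fin m) :
    g i = 0 ↔ (i : ℕ) < m - K := by
  have hKm : K ≤ m := hK ▸ (card_filter_le _ _).trans_eq (card_fin m)
  constructor
  · intro hi
    have hsub : ({j | g j ≠ 0} : Finset (Fin m)) ⊆ Ioi i := fun j hj => by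
      simp only [mem_filter, mem_univ, true_and] at hj
      exact mem_Ioi.mpr (lt_of_not_ge fun hji => hj (le_antisymm (hi ▸ hg hji) (h0 j)))
    have := card_le_card hsub
    rw [hK, Fin.card_Ioi] at this
    omega
  · intro hi
    by_contra hne
    have hsub : Ici i ⊆ ({j | g j ≠ 0} : Finset (Fin m)) := fun j hj => by
      simp only [mem_filter, mem_univ, true_and]
      exact ((lt_of_le_of_ne (h0 i) (Ne.symm hne)).trans_le (hg (mem_Ici.mp hj))).ne'
    have := card_le_card hsub
    rw [hK, Fin.card_Ici] at this
    omega

section SortedDesc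

open Finset

variable {m : ℕ} {μ : Fin m → ℝ} {k : Fin m}

theorem sortedDesc_antitone : Antitone (sortedDesc μ) :=
  fun _ _ h => Tuple.monotone_sort μ (Fin.rev_le_rev.mpr h)

theorem exists_sortedDesc_eq (i : Fin m) : ∃ l, sortedDesc μ l = μ i :=
  ⟨((Tuple.sort μ).symm i).rev, by simp [sortedDesc]⟩

theorem sortedDesc_eq_zero_iff (h0 : ∀ i, 0 ≤ μ i) (hk : #{i | μ i ≠ 0} = k + 1)
    (l : Fin m) : sortedDesc μ l = 0 ↔ k < l := by
  have hcard : #{i | (μ ∘ Tuple.sort μ) i ≠ 0} = k + 1 := by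
    rw [← hk]
    exact card_equiv (Tuple.sort μ) (by simp)
  rw [sortedDesc, (Tuple.monotone_sort μ).eq_zero_iff_lt (fun i => h0 _) hcard, Fin.val_rev]
  omega

theorem sortedDesc_pos (h0 : ∀ i, 0 ≤ μ i) (hk : #{i | μ i ≠ 0} = k + 1) :
    0 < sortedDesc μ k :=
  (h0 _).lt_of_ne fun h => lt_irrefl k ((sortedDesc_eq_zero_iff h0 hk k).mp h.symm)

theorem sortedDesc_le (h0 : ∀ i, 0 ≤ μ i) (hk : #{i | μ i ≠ 0} = k + 1) {i : Fin m}
    (hi : μ i ≠ 0) : sortedDesc μ k ≤ μ i := by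
  obtain ⟨l, hl⟩ := exists_sortedDesc_eq (μ := μ) i
  rw [← hl] at hi ⊢
  exact sortedDesc_antitone (not_lt.mp (mt (sortedDesc_eq_zero_iff h0 hk l).mpr hi))

end SortedDesc

namespace Matrix

variable {n : Type*} [Fintype n]

theorem abs_dotProduct_le_sqrt_mul_sqrt (x y : n → ℝ) :
    |x ⬝ᵥ y| ≤ √(x ⬝ᵥ x) * √(y ⬝ᵥ y) := by
  rw [← Real.sqrt_mul (by simpa using dotProduct_star_self_nonneg x)]
  exact Real.abs_le_sqrt (by simpa [dotProduct, sq] using Finset.sum_mul_sq_le_sq_mul_sq _ x y)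

theorem dotProduct_eq_sum_orthonormalBasis {ι : Type*} [Fintype ι]
    (b : OrthonormalBasis ι ℝ (EuclideanSpace ℝ n)) (x y : n → ℝ) :
    x ⬝ᵥ y = ∑ i, (x ⬝ᵥ b i) * (b i ⬝ᵥ y) := by
  have := b.sum_inner_mul_inner (WithLp.toLp 2 x) (WithLp.toLp 2 y)
  simp only [EuclideanSpace.inner_eq_star_dotProduct, star_trivial] at this
  simpa [dotProduct_comm] using this.symm

section Spectral

variable [DecidableEq n]

theorem IsHermitian.mul_dotProduct_self_le {A : Matrix n n ℝ} (hA : A.IsHermitian) {c : ℝ}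
    (hc : ∀ i, hA.eigenvalues i ≠ 0 → c ≤ hA.eigenvalues i) {y : n → ℝ}
    (hy : ∀ u, A *ᵥ u = 0 → u ⬝ᵥ y = 0) : c * (y ⬝ᵥ y) ≤ y ⬝ᵥ (A *ᵥ y) := by
  set b := hA.eigenvectorBasis
  have hAb : ∀ i, b i ⬝ᵥ (A *ᵥ y) = hA.eigenvalues i * (b i ⬝ᵥ y) := fun i => by
    rw [dotProduct_mulVec, ← mulVec_transpose, ← conjTranspose_eq_transpose_of_trivial, hA.eq,
      hA.mulVec_eigenvectorBasis, smul_dotProduct, smul_eq_mul]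
  rw [dotProduct_eq_sum_orthonormalBasis b y y, dotProduct_eq_sum_orthonormalBasis b y (A *ᵥ y),
    Finset.mul_sum]
  refine Finset.sum_le_sum fun i _ => ?_
  rw [hAb, dotProduct_comm y (b i)]
  by_cases h : hA.eigenvalues i = 0
  · have : b i ⬝ᵥ y = 0 := hy _ (by rw [hA.mulVec_eigenvectorBasis, h, zero_smul])
    simp [this]
  · nlinarith [hc i h, mul_self_nonneg (b i ⬝ᵥ y)]

theorem mul_dotProduct_row_le_apply_self {P N : Matrix n n ℝ} (hN : N.IsHermitian)
    (hPN : P * N = N) (hker : ∀ u, N *ᵥ u = 0 → P *ᵥ u = 0) {c : ℝ}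
    (hc : ∀ i, hN.eigenvalues i ≠ 0 → c ≤ hN.eigenvalues i) (j : n) :
    c * (P j ⬝ᵥ P j) ≤ N j j := by
  have hy : ∀ u, N *ᵥ u = 0 → u ⬝ᵥ P j = 0 := fun u hu => by
    rw [dotProduct_comm]
    exact congrFun (hker u hu) j
  have hNt : Nᵀ = N := by rw [← conjTranspose_eq_transpose_of_trivial, hN.eq]
  have hPNP : P * N * Pᵀ = N := by
    rw [hPN, ← hNt, ← transpose_mul, hPN]
  calc c * (P j ⬝ᵥ P j) ≤ P j ⬝ᵥ (N *ᵥ P j) := hN.mul_dotProduct_self_le hc hy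
    _ = (P * N * Pᵀ) j j := by
      rw [dotProduct_mulVec, mul_apply]
      rfl
    _ = N j j := by rw [hPNP]

theorem mul_abs_apply_le_of_transpose_mul_self {K : ℕ} {P N : Matrix n n ℝ}
    {C : Matrix (Fin K) n ℝ} (hPt : Pᵀ = P) (hPP : P * P = P) (hPC : P * Cᵀ = Cᵀ)
    (hker : ∀ u, C *ᵥ u = 0 → P *ᵥ u = 0) (hCN : Cᵀ * C = N) (hN : N.IsHermitian)
    {c : ℝ} (hc0 : 0 ≤ c) (hc : ∀ i, hN.eigenvalues i ≠ 0 → c ≤ hN.eigenvalues i) (l j : n) :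
    c * |P l j| ≤ l2norm (fun t => C t l) * l2norm (fun t => C t j) := by
  subst hCN
  have hPN : P * (Cᵀ * C) = Cᵀ * C := by rw [← Matrix.mul_assoc, hPC]
  have hkerN : ∀ u, (Cᵀ * C) *ᵥ u = 0 → P *ᵥ u = 0 := fun u hu => hker u <| by
    have h := congrArg (u ∈ ·) (ker_mulVecLin_transpose_mul_self C)
    simp only [LinearMap.mem_ker, mulVecLin_apply, eq_iff_iff] at h
    exact h.mp hu
  have hrow : ∀ j, √c * √(P j ⬝ᵥ P j) ≤ l2norm (fun t => C t j) := fun j => by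
    rw [← Real.sqrt_mul hc0, l2norm]
    refine Real.sqrt_le_sqrt ((mul_dotProduct_row_le_apply_self hN hPN hkerN hc j).trans_eq ?_)
    simp [mul_apply, sq]
  have hPlj : P l j = P l ⬝ᵥ P j := by
    conv_lhs => rw [← hPP, mul_apply]
    exact Finset.sum_congr rfl fun t _ => by rw [← transpose_apply P j t, hPt]
  calc c * |P l j| ≤ c * (√(P l ⬝ᵥ P l) * √(P j ⬝ᵥ P j)) := by
        rw [hPlj]; gcongr; exact abs_dotProduct_le_sqrt_mul_sqrt _ _
    _ = (√c * √(P l ⬝ᵥ P l)) * (√c * √(P j ⬝ᵥ P j)) := by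
        nth_rewrite 1 [← Real.mul_self_sqrt hc0]; ring
    _ ≤ _ := mul_le_mul (hrow l) (hrow j) (by positivity) (Real.sqrt_nonneg _)

end Spectral

theorem IsHermitian.eigDesc_eq {m : ℕ} {N : Matrix (Fin m) (Fin m) ℝ} (hN : N.IsHermitian) :
    eigDesc N = sortedDesc hN.eigenvalues := by
  rw [eigDesc, dif_pos hN]

theorem IsHermitian.card_eigenvalues_ne_zero {m : ℕ} {N : Matrix (Fin m) (Fin m) ℝ}
    (hN : N.IsHermitian) : (Finset.univ.filter fun i => hN.eigenvalues i ≠ 0).card = N.rank := by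
  rw [hN.rank_eq_card_non_zero_eigs, Fintype.card_subtype]

theorem PosSemidef.eigDesc_pos {m : ℕ} {N : Matrix (Fin m) (Fin m) ℝ} (hN : N.PosSemidef)
    {k : Fin m} (hk : N.rank = k + 1) : 0 < eigDesc N k := by
  rw [hN.1.eigDesc_eq]
  exact sortedDesc_pos hN.eigenvalues_nonneg (hN.1.card_eigenvalues_ne_zero.trans hk)

theorem PosSemidef.eigDesc_le {m : ℕ} {N : Matrix (Fin m) (Fin m) ℝ} (hN : N.PosSemidef)
    {k : Fin m} (hk : N.rank = k + 1) {i : Fin m} (hi : hN.1.eigenvalues i ≠ 0) :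
    eigDesc N k ≤ hN.1.eigenvalues i := by
  rw [hN.1.eigDesc_eq]
  exact sortedDesc_le hN.eigenvalues_nonneg (hN.1.card_eigenvalues_ne_zero.trans hk) hi

section RowSpaceProj

variable {κ : Type*} [Fintype κ] [DecidableEq κ]

theorem isUnit_of_rank_eq_card {R : Type*} [Field R] {A : Matrix κ κ R}
    (h : A.rank = Fintype.card κ) : IsUnit A := by
  rw [← mulVec_surjective_iff_isUnit, ← coe_mulVecLin, ← LinearMap.range_eq_top]
  exact Submodule.eq_top_of_finrank_eq (by rw [← rank, h, Module.finrank_fintype_fun_eq_card])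

noncomputable def rowSpaceProj (B : Matrix κ n ℝ) : Matrix n n ℝ := Bᵀ * (B * Bᵀ)⁻¹ * B

variable {B : Matrix κ n ℝ}

theorem rowSpaceProj_transpose : (rowSpaceProj B)ᵀ = rowSpaceProj B := by
  rw [rowSpaceProj, transpose_mul, transpose_mul, transpose_transpose, transpose_nonsing_inv,
    transpose_mul, transpose_transpose, Matrix.mul_assoc]

theorem rowSpaceProj_mulVec_eq_zero {u : n → ℝ} (hu : B *ᵥ u = 0) :
    rowSpaceProj B *ᵥ u = 0 := by
  rw [rowSpaceProj, ← mulVec_mulVec, hu, mulVec_zero]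

variable (hB : B.rank = Fintype.card κ)
include hB

theorem rowSpaceProj_mul_transpose : rowSpaceProj B * Bᵀ = Bᵀ := by
  have hG : IsUnit (B * Bᵀ).det :=
    (isUnit_iff_isUnit_det _).mp (isUnit_of_rank_eq_card (by rw [rank_self_mul_transpose, hB]))
  rw [rowSpaceProj, Matrix.mul_assoc, Matrix.mul_assoc, nonsing_inv_mul _ hG, Matrix.mul_one]

theorem rowSpaceProj_mul_self : rowSpaceProj B * rowSpaceProj B = rowSpaceProj B := by
  calc rowSpaceProj B * rowSpaceProj B = rowSpaceProj B * Bᵀ * ((B * Bᵀ)⁻¹ * B) := by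
        simp only [rowSpaceProj, Matrix.mul_assoc]
    _ = rowSpaceProj B := by rw [rowSpaceProj_mul_transpose hB, rowSpaceProj, Matrix.mul_assoc]

end RowSpaceProj

section Whitened

variable {K m : ℕ} {B : Matrix (Fin K) (Fin m) ℝ} {SW R : Matrix (Fin K) (Fin K) ℝ}

theorem transpose_mul_mul_eq_of_mul_self_eq (hR : R.IsHermitian) (hRR : R * R = SW) :
    Bᵀ * SW * B = (R * B)ᵀ * (R * B) := by
  rw [transpose_mul, ← conjTranspose_eq_transpose_of_trivial R, hR.eq, ← hRR]
  simp only [Matrix.mul_assoc]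

theorem PosSemidef.transpose_mul_mul_same (hSW : SW.PosSemidef) (B : Matrix (Fin K) (Fin m) ℝ) :
    (Bᵀ * SW * B).PosSemidef := by
  simpa only [conjTranspose_eq_transpose_of_trivial] using hSW.conjTranspose_mul_mul_same B

theorem rank_transpose_mul_mul (hSW : SW.PosDef) (hR : R.IsHermitian) (hRR : R * R = SW) :
    (Bᵀ * SW * B).rank = B.rank := by
  have hdet : IsUnit R.det :=
    (isUnit_iff_isUnit_det R).mp (isUnit_of_mul_isUnit_left (hRR ▸ hSW.isUnit))
  rw [transpose_mul_mul_eq_of_mul_self_eq hR hRR, rank_transpose_mul_self,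
    rank_mul_eq_right_of_isUnit_det _ _ hdet]

variable {k : Fin m} (hB : B.rank = K) (hk : K = k + 1) (hSW : SW.PosDef) (hR : R.IsHermitian)
  (hRR : R * R = SW)
include hB hk hSW hR hRR

theorem eigDesc_transpose_mul_mul_pos : 0 < eigDesc (Bᵀ * SW * B) k :=
  (hSW.posSemidef.transpose_mul_mul_same B).eigDesc_pos
    (by rw [rank_transpose_mul_mul hSW hR hRR, hB, hk])

theorem eigDesc_mul_abs_rowSpaceProj_apply_le (l j : Fin m) :
    eigDesc (Bᵀ * SW * B) k * |rowSpaceProj B l j| ≤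
      l2norm (R *ᵥ fun t => B t l) * l2norm (R *ᵥ fun t => B t j) := by
  have hRunit : IsUnit R := isUnit_of_mul_isUnit_left (hRR ▸ hSW.isUnit)
  have hB' : B.rank = Fintype.card (Fin K) := by rw [hB, Fintype.card_fin]
  have hN : (Bᵀ * SW * B).PosSemidef := hSW.posSemidef.transpose_mul_mul_same B
  have hrank : (Bᵀ * SW * B).rank = k + 1 := by rw [rank_transpose_mul_mul hSW hR hRR, hB, hk]
  refine mul_abs_apply_le_of_transpose_mul_self rowSpaceProj_transpose (rowSpaceProj_mul_self hB')
    ?_ (fun u hu => rowSpaceProj_mulVec_eq_zero ?_)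
    (transpose_mul_mul_eq_of_mul_self_eq hR hRR).symm
    hN.1 (hN.eigDesc_pos hrank).le (fun i hi => hN.eigDesc_le hrank hi) l j
  · rw [transpose_mul, ← Matrix.mul_assoc, rowSpaceProj_mul_transpose hB']
  · exact mulVec_injective_iff_isUnit.mpr hRunit (by rwa [mulVec_mulVec, mulVec_zero])

end Whitened

end Matrix

/-- Entrywise bound on `Θ P_B` via the row ℓ1 norm of `Θ`, the columns of `Σ_W^{1/2} B`,
and the K-th largest eigenvalue of `Bᵀ Σ_W B`. -/
theorem stmt3 (p m K : ℕ) (hK : 0 < K) (hKm : K ≤ m)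
    (Θ : Matrix (Fin p) (Fin m) ℝ) (B : Matrix (Fin K) (Fin m) ℝ) (hB : B.rank = K)
    (SW R : Matrix (Fin K) (Fin K) ℝ) (hSW : SW.PosDef)
    (hR : R.PosSemidef) (hRR : R * R = SW)
    (i : Fin p) (j : Fin m) :
    |(Θ * (Bᵀ * (B * Bᵀ)⁻¹ * B)) i j| ≤
      l1norm (fun l => Θ i l) * (⨆ l : Fin m, l2norm (R.mulVec (fun k => B k l))) *
        l2norm (R.mulVec (fun k => B k j)) / eigDesc (Bᵀ * SW * B) ⟨K - 1, by omega⟩ := by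
  set k : Fin m := ⟨K - 1, by omega⟩
  have hk : K = k + 1 := by simp only [k]; omega
  set c := eigDesc (Bᵀ * SW * B) k
  set S := ⨆ l : Fin m, l2norm (R.mulVec (fun k => B k l))
  set b := l2norm (R.mulVec (fun k => B k j))
  have hc : 0 < c := eigDesc_transpose_mul_mul_pos hB hk hSW hR.1 hRR
  have hP : ∀ l, |rowSpaceProj B l j| ≤ S * b / c := fun l => by
    rw [le_div_iff₀ hc, mul_comm]
    exact (eigDesc_mul_abs_rowSpaceProj_apply_le hB hk hSW hR.1 hRR l j).trans
      (mul_le_mul_of_nonneg_right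
        (le_ciSup (f := fun l => l2norm (R *ᵥ fun k => B k l)) (Set.finite_range _).bddAbove l)
        (Real.sqrt_nonneg _))
  calc |(Θ * rowSpaceProj B) i j| ≤ ∑ l, |Θ i l| * (S * b / c) := by
        rw [mul_apply]
        refine (Finset.abs_sum_le_sum_abs _ _).trans (Finset.sum_le_sum fun l _ => ?_)
        rw [abs_mul]
        gcongr
        exact hP l
    _ = _ := by rw [← Finset.sum_mul, l1norm]; ring
end

section
/- Let X ∈ R^{n×p}, ỹ ∈ R^n, λ3 > 0, and let Θ̂ be a minimizer of f(θ) = (1/n)‖ỹ - Xθ‖_2^2 + λ3‖θ‖_1. Let Θ̄ ∈ R^p be any vector with supp(Θ̄) ⊆ S, |S| ≤ s. Suppose the cross term satisfies (2/n)|⟨XΔ, ỹ - XΘ̄⟩| ≤ (λ3/2)‖Δ‖_1 + (2/n)‖XΔ‖_2 R for all Δ = Θ̂-Θ̄ and some R ≥ 0. Then (1/n)‖XΔ‖_2^2 ≤ (2/n)‖XΔ‖_2 R + (3/2)λ3‖Δ_S‖_1 - (1/2)λ3‖Δ_{S^c}‖_1. -/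
open Matrix MeasureTheory

/- With `Δ = Θh - Θb`, comparing the objective at `Θh` with its value at `Θb` and expanding
`yt - X Θh = (yt - X Θb) - X Δ` leaves `‖X Δ‖²` on the left and the cross term on the right.
The cross term is absorbed by the assumed bound, and since `Θb` vanishes off `S`, the reverse
triangle inequality on `S` bounds the penalty difference `‖Θb‖₁ - ‖Θh‖₁` by
`‖Δ_S‖₁ - ‖Δ_{Sᶜ}‖₁`. -/

lemma Finset.sum_sub_sq {ι : Type*} (s : Finset ι) (a b : ι → ℝ) :
    ∑ i ∈ s, (a i - b i) ^ 2 =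
      ∑ i ∈ s, a i ^ 2 - 2 * ∑ i ∈ s, b i * a i + ∑ i ∈ s, b i ^ 2 := by
  rw [Finset.mul_sum, ← Finset.sum_sub_distrib, ← Finset.sum_add_distrib]
  exact Finset.sum_congr rfl fun i _ => by ring

section Lasso

variable {n p : ℕ}

lemma penalizedLeastSquares_basic_inequality (X : Matrix (Fin n) (Fin p) ℝ) (y : Fin n → ℝ)
    (c : ℝ) (pen : (Fin p → ℝ) → ℝ) {θh θb : Fin p → ℝ}
    (hle : c * ∑ i, (y i - (X *ᵥ θh) i) ^ 2 + pen θh ≤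
      c * ∑ i, (y i - (X *ᵥ θb) i) ^ 2 + pen θb) :
    c * ∑ i, ((X *ᵥ (θh - θb)) i) ^ 2 ≤
      2 * c * ∑ i, (X *ᵥ (θh - θb)) i * (y i - (X *ᵥ θb) i) + (pen θb - pen θh) := by
  have hres : ∀ i, y i - (X *ᵥ θh) i = (y i - (X *ᵥ θb) i) - (X *ᵥ (θh - θb)) i := by
    intro i
    simp only [mulVec_sub, Pi.sub_apply]
    ring
  simp only [hres, Finset.sum_sub_sq] at hle
  linear_combination hle

lemma l1norm_eq_sum_add_sum_compl (v : Fin p → ℝ) (S : Finset (Fin p)) :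
    l1norm v = ∑ j ∈ S, |v j| + ∑ j ∈ Sᶜ, |v j| :=
  (Finset.sum_add_sum_compl S _).symm

lemma l1norm_sub_l1norm_le_of_support_subset {θh θb : Fin p → ℝ} {S : Finset (Fin p)}
    (hsupp : ∀ j, j ∉ S → θb j = 0) :
    l1norm θb - l1norm θh ≤ ∑ j ∈ S, |(θh - θb) j| - ∑ j ∈ Sᶜ, |(θh - θb) j| := by
  have hb : ∑ j ∈ Sᶜ, |θb j| = 0 :=
    Finset.sum_eq_zero fun j hj => by rw [hsupp j (Finset.mem_compl.mp hj), abs_zero]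
  have hh : ∑ j ∈ Sᶜ, |θh j| = ∑ j ∈ Sᶜ, |(θh - θb) j| :=
    Finset.sum_congr rfl fun j hj => by
      rw [Pi.sub_apply, hsupp j (Finset.mem_compl.mp hj), sub_zero]
  have hS : ∑ j ∈ S, |θb j| - ∑ j ∈ S, |θh j| ≤ ∑ j ∈ S, |(θh - θb) j| := by
    rw [← Finset.sum_sub_distrib]
    exact Finset.sum_le_sum fun j _ => by
      rw [Pi.sub_apply, abs_sub_comm]
      exact abs_sub_abs_le_abs_sub _ _
  rw [l1norm_eq_sum_add_sum_compl θb S, l1norm_eq_sum_add_sum_compl θh S, hb, hh]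
  linarith

end Lasso

theorem stmt18_general (n p : ℕ)
    (X : Matrix (Fin n) (Fin p) ℝ) (yt : Fin n → ℝ)
    (lam3 : ℝ) (hlam3 : 0 < lam3)
    (Θh : Fin p → ℝ)
    (hmin : ∀ θ : Fin p → ℝ,
      (1 / (n : ℝ)) * ∑ i, (yt i - X.mulVec Θh i) ^ 2 + lam3 * l1norm Θh ≤
        (1 / (n : ℝ)) * ∑ i, (yt i - X.mulVec θ i) ^ 2 + lam3 * l1norm θ)
    (Θb : Fin p → ℝ) (S : Finset (Fin p))
    (hsupp : ∀ j, j ∉ S → Θb j = 0)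
    (R : ℝ)
    (hcross : (2 / (n : ℝ)) *
        |∑ i, X.mulVec (Θh - Θb) i * (yt i - X.mulVec Θb i)| ≤
      (lam3 / 2) * l1norm (Θh - Θb) +
        (2 / (n : ℝ)) * l2norm (X.mulVec (Θh - Θb)) * R) :
    (1 / (n : ℝ)) * ∑ i, (X.mulVec (Θh - Θb) i) ^ 2 ≤
      (2 / (n : ℝ)) * l2norm (X.mulVec (Θh - Θb)) * R +
        (3 / 2) * lam3 * ∑ j ∈ S, |(Θh - Θb) j| -
          (1 / 2) * lam3 * ∑ j ∈ Sᶜ, |(Θh - Θb) j| := by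
  have hbasic := penalizedLeastSquares_basic_inequality X yt (1 / (n : ℝ))
    (fun θ => lam3 * l1norm θ) (hmin Θb)
  have hcross' : (2 / (n : ℝ)) * ∑ i, (X *ᵥ (Θh - Θb)) i * (yt i - (X *ᵥ Θb) i) ≤
      (lam3 / 2) * (∑ j ∈ S, |(Θh - Θb) j| + ∑ j ∈ Sᶜ, |(Θh - Θb) j|) +
        (2 / (n : ℝ)) * l2norm (X *ᵥ (Θh - Θb)) * R := by
    rw [← l1norm_eq_sum_add_sum_compl]
    exact (mul_le_mul_of_nonneg_left (le_abs_self _) (by positivity)).trans hcross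
  have hcone := mul_le_mul_of_nonneg_left
    (l1norm_sub_l1norm_le_of_support_subset (θh := Θh) hsupp) hlam3.le
  linear_combination hbasic + hcross' + hcone

/-- Deterministic basic inequality for the lasso with an additional bias term `R`. -/
theorem stmt18 (n p s : ℕ) (hn : 0 < n)
    (X : Matrix (Fin n) (Fin p) ℝ) (yt : Fin n → ℝ)
    (lam3 : ℝ) (hlam3 : 0 < lam3)
    (Θh : Fin p → ℝ)
    (hmin : ∀ θ : Fin p → ℝ,
      (1 / (n : ℝ)) * ∑ i, (yt i - X.mulVec Θh i) ^ 2 + lam3 * l1norm Θh ≤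
        (1 / (n : ℝ)) * ∑ i, (yt i - X.mulVec θ i) ^ 2 + lam3 * l1norm θ)
    (Θb : Fin p → ℝ) (S : Finset (Fin p)) (hcard : S.card ≤ s)
    (hsupp : ∀ j, j ∉ S → Θb j = 0)
    (R : ℝ) (hR : 0 ≤ R)
    (hcross : (2 / (n : ℝ)) *
        |∑ i, X.mulVec (Θh - Θb) i * (yt i - X.mulVec Θb i)| ≤
      (lam3 / 2) * l1norm (Θh - Θb) +
        (2 / (n : ℝ)) * l2norm (X.mulVec (Θh - Θb)) * R) :
    (1 / (n : ℝ)) * ∑ i, (X.mulVec (Θh - Θb) i) ^ 2 ≤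
      (2 / (n : ℝ)) * l2norm (X.mulVec (Θh - Θb)) * R +
        (3 / 2) * lam3 * ∑ j ∈ S, |(Θh - Θb) j| -
          (1 / 2) * lam3 * ∑ j ∈ Sᶜ, |(Θh - Θb) j| :=
  stmt18_general n p X yt lam3 hlam3 Θh hmin Θb S hsupp R hcross
end

section
/- Let ξ ∈ R^d be a centered γ-sub-Gaussian random vector, i.e., E[exp(⟨u, ξ⟩)] ≤ exp(‖u‖_2^2 γ^2 / 2) for all u ∈ R^d. Then for every symmetric positive semidefinite matrix H ∈ R^{d×d} and every t ≥ 0, P( ξ^T H ξ > γ^2 (√(tr(H)) + √(2‖H‖_op t))^2 ) ≤ e^{-t}. -/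
open Matrix MeasureTheory

/-!
For a standard Gaussian vector `g`, `exp (‖y‖² / 2) = E exp ⟪y, g⟫`. Factor `H = L Lᵀ` with
`Lᵀ L = diag (λᵢ)`, the eigenvalues of `H`. Averaging over an independent `g`, exchanging the two
integrals and applying the sub-Gaussian bound to `⟪L g, ξ⟫` gives
`E exp (s ξᵀHξ / γ²) ≤ E exp (s ∑ λᵢ gᵢ²) = ∏ (1 - 2 s λᵢ)^(-1/2) ≤ exp (s tr H / (1 - 2 s ‖H‖))`,
and a Chernoff bound with the optimal `s` yields the tail `e^{-t}`.
-/

open Real ProbabilityTheory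

lemma ENNReal.ofReal_exp_sum {ι : Type*} (s : Finset ι) (f : ι → ℝ) :
    ENNReal.ofReal (exp (∑ i ∈ s, f i)) = ∏ i ∈ s, ENNReal.ofReal (exp (f i)) := by
  rw [Real.exp_sum, ENNReal.ofReal_prod_of_nonneg fun i _ => (exp_pos _).le]

lemma dotProduct_mulVec_self {R m n : Type*} [CommSemiring R] [Fintype m] [Fintype n]
    (A : Matrix m n R) (x : n → R) : (A *ᵥ x) ⬝ᵥ (A *ᵥ x) = x ⬝ᵥ (Aᵀ * A) *ᵥ x := by
  rw [← mulVec_mulVec, dotProduct_mulVec, ← mulVec_transpose, dotProduct_comm]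

lemma lintegral_pi_prod_eq_prod {ι : Type*} [Fintype ι] {X : ι → Type*}
    [∀ i, MeasurableSpace (X i)] (ν : ∀ i, Measure (X i)) [∀ i, IsProbabilityMeasure (ν i)]
    (f : ∀ i, X i → ENNReal) (hf : ∀ i, Measurable (f i)) :
    ∫⁻ x, ∏ i, f i (x i) ∂Measure.pi ν = ∏ i, ∫⁻ y, f i y ∂ν i := by
  rw [lintegral_prod_eq_prod_lintegral_of_indepFun _ _
    (iIndepFun_pi fun i => (hf i).aemeasurable) fun i => (hf i).comp (measurable_pi_apply i)]
  exact Finset.prod_congr rfl fun i _ => (measurePreserving_eval ν i).lintegral_comp (hf i)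

lemma lintegral_exp_mul_gaussianReal (v : ℝ) :
    ∫⁻ x, ENNReal.ofReal (exp (v * x)) ∂gaussianReal 0 1 = ENNReal.ofReal (exp (v ^ 2 / 2)) := by
  rw [← ofReal_integral_eq_lintegral_ofReal (integrable_exp_mul_gaussianReal v)
    (ae_of_all _ fun _ => (exp_pos _).le)]
  have hmgf := congrFun (mgf_id_gaussianReal (μ := 0) (v := 1)) v
  simp only [mgf, id, zero_mul, zero_add, NNReal.coe_one, one_mul] at hmgf
  rw [hmgf]

lemma lintegral_exp_mul_sq_gaussianReal {c : ℝ} (hc : c < 1 / 2) :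
    ∫⁻ x, ENNReal.ofReal (exp (c * x ^ 2)) ∂gaussianReal 0 1
      = ENNReal.ofReal (√(1 - 2 * c))⁻¹ := by
  have hb : 0 < 1 / 2 - c := by linarith
  have hdens : ∀ x, gaussianPDFReal 0 1 x * exp (c * x ^ 2)
      = (√(2 * π))⁻¹ * exp (-(1 / 2 - c) * x ^ 2) := fun x => by
    rw [gaussianPDFReal, mul_assoc, ← exp_add]
    congr 3 <;> push_cast <;> ring
  rw [gaussianReal_of_var_ne_zero 0 one_ne_zero,
    lintegral_withDensity_eq_lintegral_mul _ (measurable_gaussianPDF 0 1) (by fun_prop)]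
  simp only [Pi.mul_apply, gaussianPDF, ← ENNReal.ofReal_mul (gaussianPDFReal_nonneg 0 1 _), hdens]
  rw [← ofReal_integral_eq_lintegral_ofReal ((integrable_exp_neg_mul_sq hb).const_mul _)
    (ae_of_all _ fun _ => by positivity), integral_const_mul, integral_gaussian]
  congr 1
  rw [← sqrt_inv, ← sqrt_inv, ← sqrt_mul (by positivity)]
  congr 1
  field_simp

lemma inv_sqrt_one_sub_le_exp {x y : ℝ} (hx : 0 ≤ x) (hxy : x ≤ y) (hy : y < 1) :
    (√(1 - x))⁻¹ ≤ exp (x / (2 * (1 - y))) := by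
  have hx1 : 0 < 1 - x := by linarith
  have hlog : -log (1 - x) ≤ x / (1 - y) := calc
    -log (1 - x) = log (1 - x)⁻¹ := (log_inv _).symm
    _ ≤ (1 - x)⁻¹ - 1 := log_le_sub_one_of_pos (inv_pos.2 hx1)
    _ = x / (1 - x) := by field_simp; ring
    _ ≤ x / (1 - y) := div_le_div_of_nonneg_left hx (by linarith) (by linarith)
  rw [← exp_log (inv_pos.2 (sqrt_pos.2 hx1)), log_inv, log_sqrt hx1.le, exp_le_exp,
    mul_comm, ← div_div]
  linarith

section StandardGaussian

variable {ι : Type*} [Fintype ι]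

lemma lintegral_exp_dotProduct_stdGaussian (v : ι → ℝ) :
    ∫⁻ g, ENNReal.ofReal (exp (v ⬝ᵥ g)) ∂Measure.pi (fun _ : ι => gaussianReal 0 1)
      = ENNReal.ofReal (exp (v ⬝ᵥ v / 2)) := by
  simp only [dotProduct, ENNReal.ofReal_exp_sum]
  rw [lintegral_pi_prod_eq_prod _ (fun i x => ENNReal.ofReal (exp (v i * x))) fun i => by fun_prop,
    Finset.sum_div, ENNReal.ofReal_exp_sum]
  simp only [lintegral_exp_mul_gaussianReal, sq]

lemma lintegral_exp_sum_mul_sq_stdGaussian (c : ι → ℝ) (hc : ∀ i, c i < 1 / 2) :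
    ∫⁻ g, ENNReal.ofReal (exp (∑ i, c i * g i ^ 2)) ∂Measure.pi (fun _ : ι => gaussianReal 0 1)
      = ∏ i, ENNReal.ofReal (√(1 - 2 * c i))⁻¹ := by
  simp only [ENNReal.ofReal_exp_sum]
  rw [lintegral_pi_prod_eq_prod _ (fun i x => ENNReal.ofReal (exp (c i * x ^ 2)))
    fun i => by fun_prop]
  exact Finset.prod_congr rfl fun i _ => lintegral_exp_mul_sq_gaussianReal (hc i)

lemma lintegral_exp_mul_sum_mul_sq_stdGaussian_le {e : ι → ℝ} {B s : ℝ}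
    (he : ∀ i, 0 ≤ e i) (heB : ∀ i, e i ≤ B) (hs : 0 ≤ s) (hsB : 2 * s * B < 1) :
    ∫⁻ g, ENNReal.ofReal (exp (s * ∑ i, e i * g i ^ 2))
        ∂Measure.pi (fun _ : ι => gaussianReal 0 1)
      ≤ ENNReal.ofReal (exp (s * (∑ i, e i) / (1 - 2 * s * B))) := by
  rw [mul_div_assoc, Finset.sum_div]
  have hse : ∀ i, 2 * (s * e i) ≤ 2 * s * B := fun i => by nlinarith [he i, heB i]
  simp only [Finset.mul_sum, ← mul_assoc]
  rw [lintegral_exp_sum_mul_sq_stdGaussian _ fun i => by linarith [hse i], ENNReal.ofReal_exp_sum]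
  gcongr with i
  calc (√(1 - 2 * (s * e i)))⁻¹ ≤ exp (2 * (s * e i) / (2 * (1 - 2 * s * B))) :=
        inv_sqrt_one_sub_le_exp (by have := he i; positivity) (hse i) hsB
    _ = exp (s * (e i / (1 - 2 * s * B))) := by rw [mul_div_mul_left _ _ two_ne_zero, mul_div_assoc]

end StandardGaussian

section SubGaussianVector

variable {Ω ι κ : Type*} [Fintype ι] [Fintype κ] [MeasurableSpace Ω] {μ : Measure Ω}
  {γ : ℝ} {ξ : Ω → ι → ℝ}

lemma lintegral_exp_dotProduct_le_of_subGaussian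
    (hint : ∀ u : ι → ℝ, Integrable (fun ω => exp (∑ i, u i * ξ ω i)) μ)
    (hsub : ∀ u : ι → ℝ,
      ∫ ω, exp (∑ i, u i * ξ ω i) ∂μ ≤ exp ((∑ i, (u i) ^ 2) * γ ^ 2 / 2))
    (u : ι → ℝ) :
    ∫⁻ ω, ENNReal.ofReal (exp (u ⬝ᵥ ξ ω)) ∂μ ≤ ENNReal.ofReal (exp (γ ^ 2 * (u ⬝ᵥ u) / 2)) := by
  simp only [dotProduct]
  rw [← ofReal_integral_eq_lintegral_ofReal (hint u) (ae_of_all _ fun _ => (exp_pos _).le)]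
  refine ENNReal.ofReal_le_ofReal ((hsub u).trans_eq ?_)
  simp only [sq]
  ring_nf

lemma lintegral_exp_half_quadForm_le [SFinite μ] (hmeas : Measurable ξ)
    (hint : ∀ u : ι → ℝ, Integrable (fun ω => exp (∑ i, u i * ξ ω i)) μ)
    (hsub : ∀ u : ι → ℝ,
      ∫ ω, exp (∑ i, u i * ξ ω i) ∂μ ≤ exp ((∑ i, (u i) ^ 2) * γ ^ 2 / 2))
    (L : Matrix ι κ ℝ) :
    ∫⁻ ω, ENNReal.ofReal (exp (ξ ω ⬝ᵥ (L * Lᵀ) *ᵥ ξ ω / 2)) ∂μ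
      ≤ ∫⁻ g, ENNReal.ofReal (exp (γ ^ 2 * (g ⬝ᵥ (Lᵀ * L) *ᵥ g) / 2))
          ∂Measure.pi (fun _ : κ => gaussianReal 0 1) := calc
  _ = ∫⁻ ω, ∫⁻ g, ENNReal.ofReal (exp ((Lᵀ *ᵥ ξ ω) ⬝ᵥ g))
        ∂Measure.pi (fun _ : κ => gaussianReal 0 1) ∂μ := by
      simp only [lintegral_exp_dotProduct_stdGaussian, dotProduct_mulVec_self, transpose_transpose]
  _ = ∫⁻ g, ∫⁻ ω, ENNReal.ofReal (exp ((L *ᵥ g) ⬝ᵥ ξ ω)) ∂μ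
        ∂Measure.pi (fun _ : κ => gaussianReal 0 1) := by
      rw [lintegral_lintegral_swap (by fun_prop)]
      simp only [mulVec_transpose, ← dotProduct_mulVec, dotProduct_comm (ξ _)]
  _ ≤ _ := lintegral_mono fun g => (lintegral_exp_dotProduct_le_of_subGaussian hint hsub _).trans_eq
      (by rw [dotProduct_mulVec_self])

end SubGaussianVector

lemma Matrix.PosSemidef.exists_mul_transpose_eq {ι : Type*} [Fintype ι] [DecidableEq ι]
    {H : Matrix ι ι ℝ} (hH : H.PosSemidef) :
    ∃ L : Matrix ι ι ℝ, L * Lᵀ = H ∧ Lᵀ * L = diagonal hH.1.eigenvalues := by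
  set U : Matrix ι ι ℝ := (hH.1.eigenvectorUnitary : Matrix ι ι ℝ)
  have hspec : H = U * diagonal hH.1.eigenvalues * Uᵀ := by
    simpa [U, Unitary.conjStarAlgAut_apply, star_eq_conjTranspose,
      conjTranspose_eq_transpose_of_trivial] using hH.1.spectral_theorem
  have hUU : Uᵀ * U = 1 := by
    simpa [U, star_eq_conjTranspose, conjTranspose_eq_transpose_of_trivial]
      using Unitary.coe_star_mul_self hH.1.eigenvectorUnitary
  have hD : diagonal (fun i => √(hH.1.eigenvalues i)) * diagonal (fun i => √(hH.1.eigenvalues i))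
      = diagonal hH.1.eigenvalues := by
    rw [diagonal_mul_diagonal]
    congr 1; ext i
    exact mul_self_sqrt (hH.eigenvalues_nonneg i)
  refine ⟨U * diagonal fun i => √(hH.1.eigenvalues i), ?_, ?_⟩
  · rw [transpose_mul, diagonal_transpose, Matrix.mul_assoc, ← Matrix.mul_assoc (diagonal _), hD,
      ← Matrix.mul_assoc]
    exact hspec.symm
  · rw [transpose_mul, diagonal_transpose, Matrix.mul_assoc, ← Matrix.mul_assoc Uᵀ, hUU,
      Matrix.one_mul, hD]

lemma Matrix.IsHermitian.eigenvalues_le_opNorm {d : ℕ} {H : Matrix (Fin d) (Fin d) ℝ}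
    (hH : H.IsHermitian) (i : Fin d) : hH.eigenvalues i ≤ opNorm H := by
  set T := LinearMap.toContinuousLinearMap (toEuclideanLin H)
  have hv : ‖hH.eigenvectorBasis i‖ = 1 := hH.eigenvectorBasis.orthonormal.1 i
  have hTv : T (hH.eigenvectorBasis i) = hH.eigenvalues i • hH.eigenvectorBasis i := by
    apply (WithLp.equiv 2 (Fin d → ℝ)).injective
    simpa [T] using hH.mulVec_eigenvectorBasis i
  calc hH.eigenvalues i ≤ ‖T (hH.eigenvectorBasis i)‖ := by
        rw [hTv, norm_smul, hv, mul_one]; exact le_abs_self _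
    _ ≤ ‖T‖ * ‖hH.eigenvectorBasis i‖ := T.le_opNorm _
    _ = opNorm H := by rw [hv, mul_one]; rfl

lemma lintegral_exp_mul_quadForm_le {Ω : Type*} [MeasurableSpace Ω] {μ : Measure Ω} [SFinite μ]
    {d : ℕ} {γ : ℝ} {ξ : Ω → Fin d → ℝ} (hmeas : Measurable ξ)
    (hint : ∀ u : Fin d → ℝ, Integrable (fun ω => exp (∑ i, u i * ξ ω i)) μ)
    (hsub : ∀ u : Fin d → ℝ,
      ∫ ω, exp (∑ i, u i * ξ ω i) ∂μ ≤ exp ((∑ i, (u i) ^ 2) * γ ^ 2 / 2))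
    {H : Matrix (Fin d) (Fin d) ℝ} (hH : H.PosSemidef) {lam : ℝ} (hlam : 0 ≤ lam)
    (hlamH : 2 * (lam * γ ^ 2) * opNorm H < 1) :
    ∫⁻ ω, ENNReal.ofReal (exp (lam * (ξ ω ⬝ᵥ H *ᵥ ξ ω))) ∂μ
      ≤ ENNReal.ofReal (exp (lam * γ ^ 2 * H.trace / (1 - 2 * (lam * γ ^ 2) * opNorm H))) := by
  obtain ⟨L, hLLt, hLtL⟩ := hH.exists_mul_transpose_eq
  have hc : √(2 * lam) * √(2 * lam) = 2 * lam := mul_self_sqrt (by positivity)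
  have hdec := lintegral_exp_half_quadForm_le hmeas hint hsub (√(2 * lam) • L)
  simp only [transpose_smul, smul_mul_smul_comm, hc, hLLt, hLtL, smul_mulVec, dotProduct_smul,
    smul_eq_mul] at hdec
  rw [hH.1.trace_eq_sum_eigenvalues]
  calc _ = _ := lintegral_congr fun ω => by congr 2; ring
    _ ≤ _ := hdec
    _ = ∫⁻ g, ENNReal.ofReal (exp (lam * γ ^ 2 * ∑ i, hH.1.eigenvalues i * g i ^ 2))
          ∂Measure.pi (fun _ : Fin d => gaussianReal 0 1) := lintegral_congr fun g => by
      congr 2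
      simp only [mulVec_diagonal, dotProduct, Finset.mul_sum, Finset.sum_div]
      exact Finset.sum_congr rfl fun i _ => by ring
    _ ≤ _ := lintegral_exp_mul_sum_mul_sq_stdGaussian_le hH.eigenvalues_nonneg
          hH.1.eigenvalues_le_opNorm (by positivity) hlamH
    _ = _ := by simp

lemma measure_lt_le_exp_mul_lintegral_exp {Ω : Type*} [MeasurableSpace Ω] {μ : Measure Ω}
    {Z : Ω → ℝ} (hZ : Measurable Z) {lam : ℝ} (hlam : 0 ≤ lam) (a : ℝ) :
    μ {ω | a < Z ω}
      ≤ ENNReal.ofReal (exp (-(lam * a))) * ∫⁻ ω, ENNReal.ofReal (exp (lam * Z ω)) ∂μ := calc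
  _ ≤ μ {ω | ENNReal.ofReal (exp (lam * a)) ≤ ENNReal.ofReal (exp (lam * Z ω))} :=
      measure_mono fun ω hω => ENNReal.ofReal_le_ofReal (exp_le_exp.2 (by gcongr; exact hω.le))
  _ ≤ (∫⁻ ω, ENNReal.ofReal (exp (lam * Z ω)) ∂μ) / ENNReal.ofReal (exp (lam * a)) :=
      meas_ge_le_lintegral_div (by fun_prop) (by simp [exp_pos]) ENNReal.ofReal_ne_top
  _ = _ := by
      rw [div_eq_mul_inv, mul_comm, ← ENNReal.ofReal_inv_of_pos (exp_pos _), ← exp_neg]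

lemma exists_mul_div_one_sub_sub_mul_sq_eq_neg {A B t : ℝ} (hA : 0 < A) (hB : 0 < B)
    (ht : 0 ≤ t) :
    ∃ s, 0 ≤ s ∧ 2 * s * B < 1 ∧ s * A / (1 - 2 * s * B) - s * (√A + √(2 * B * t)) ^ 2 = -t := by
  set r := √(2 * B * t)
  set w := √A + r
  have hsA : 0 < √A := sqrt_pos.2 hA
  have hw : 0 < w := by positivity
  have hr : r ^ 2 = 2 * B * t := sq_sqrt (by positivity)
  -- the minimizer of the left-hand side, characterized by `1 - 2 s B = √A / w`
  have hs : 1 - 2 * (r / (2 * B * w)) * B = √A / w := by field_simp; ring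
  refine ⟨r / (2 * B * w), by positivity, by linarith [div_pos hsA hw], ?_⟩
  have hA2 : √A ^ 2 = A := sq_sqrt hA.le
  rw [hs]
  field_simp
  linear_combination (-r) * hA2 - √A * hr

theorem stmt19_general {Ω : Type*} [MeasurableSpace Ω] (μ : Measure Ω) [IsProbabilityMeasure μ]
    (d : ℕ) (γ : ℝ) (hγ : 0 < γ)
    (ξ : Ω → Fin d → ℝ) (hmeas : Measurable ξ)
    (hint : ∀ u : Fin d → ℝ, Integrable (fun ω => Real.exp (∑ i, u i * ξ ω i)) μ)
    (hsub : ∀ u : Fin d → ℝ,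
      ∫ ω, Real.exp (∑ i, u i * ξ ω i) ∂μ ≤ Real.exp ((∑ i, (u i) ^ 2) * γ ^ 2 / 2))
    (H : Matrix (Fin d) (Fin d) ℝ) (hH : H.PosSemidef) (t : ℝ) :
    μ {ω | γ ^ 2 * (Real.sqrt H.trace + Real.sqrt (2 * opNorm H * t)) ^ 2 <
        ξ ω ⬝ᵥ H.mulVec (ξ ω)} ≤ ENNReal.ofReal (Real.exp (-t)) := by
  rcases le_or_gt t 0 with ht | ht
  · exact prob_le_one.trans (by simpa using ht)
  rcases eq_or_ne H 0 with rfl | hH0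
  · have hnonneg : ¬γ ^ 2 * (√(trace (0 : Matrix (Fin d) (Fin d) ℝ))
        + √(2 * opNorm (0 : Matrix (Fin d) (Fin d) ℝ) * t)) ^ 2 < 0 := not_lt.2 (by positivity)
    simp only [zero_mulVec, dotProduct_zero, hnonneg, Set.ofPred_false, measure_empty, zero_le]
  have hA : 0 < H.trace := hH.trace_nonneg.lt_of_ne' (mt hH.trace_eq_zero_iff.1 hH0)
  have hB : 0 < opNorm H := norm_pos_iff.2 (by simpa using hH0)
  obtain ⟨s, hs, hsB, hst⟩ := exists_mul_div_one_sub_sub_mul_sq_eq_neg hA hB ht.le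
  set w := √H.trace + √(2 * opNorm H * t)
  have hlam : s / γ ^ 2 * γ ^ 2 = s := div_mul_cancel₀ _ (by positivity)
  calc _ ≤ ENNReal.ofReal (exp (-(s / γ ^ 2 * (γ ^ 2 * w ^ 2))))
        * ∫⁻ ω, ENNReal.ofReal (exp (s / γ ^ 2 * (ξ ω ⬝ᵥ H *ᵥ ξ ω))) ∂μ :=
      measure_lt_le_exp_mul_lintegral_exp (by fun_prop) (by positivity) _
    _ ≤ ENNReal.ofReal (exp (-(s * w ^ 2)))
        * ENNReal.ofReal (exp (s * H.trace / (1 - 2 * s * opNorm H))) := by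
      rw [← mul_assoc, hlam]
      gcongr
      have hmgf := lintegral_exp_mul_quadForm_le (lam := s / γ ^ 2) hmeas hint hsub hH
        (by positivity) (by rwa [hlam])
      rwa [hlam] at hmgf
    _ = ENNReal.ofReal (exp (-t)) := by
      rw [← ENNReal.ofReal_mul (exp_pos _).le, ← exp_add, ← hst]
      ring_nf

/-- Tail bound for quadratic forms of a centered γ-sub-Gaussian random vector:
`P(ξᵀHξ > γ²(√tr(H) + √(2‖H‖_op t))²) ≤ e^{-t}`. -/
theorem stmt19 {Ω : Type*} [MeasurableSpace Ω] (μ : Measure Ω) [IsProbabilityMeasure μ]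
    (d : ℕ) (γ : ℝ) (hγ : 0 < γ)
    (ξ : Ω → Fin d → ℝ) (hmeas : Measurable ξ)
    (hcent : ∀ i, ∫ ω, ξ ω i ∂μ = 0)
    (hint : ∀ u : Fin d → ℝ, Integrable (fun ω => Real.exp (∑ i, u i * ξ ω i)) μ)
    (hsub : ∀ u : Fin d → ℝ,
      ∫ ω, Real.exp (∑ i, u i * ξ ω i) ∂μ ≤ Real.exp ((∑ i, (u i) ^ 2) * γ ^ 2 / 2))
    (H : Matrix (Fin d) (Fin d) ℝ) (hH : H.PosSemidef) (t : ℝ) (ht : 0 ≤ t) :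
    μ {ω | γ ^ 2 * (Real.sqrt H.trace + Real.sqrt (2 * opNorm H * t)) ^ 2 <
        ξ ω ⬝ᵥ H.mulVec (ξ ω)} ≤ ENNReal.ofReal (Real.exp (-t)) :=
  stmt19_general μ d γ hγ ξ hmeas hint hsub H hH t
end
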